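/- Let P_1, …, P_N be discrete probability measures on ℝ^d, let λ_1, …, λ_N > 0 with ∑_{i=1}^N λ_i = 1, and let P̄ be a barycenter of P_1, …, P_N. Then there exists a non-mass splitting optimal transport from P̄ to P_1, …, P_N: there are maps T_1, …, T_N : ℝ^d → ℝ^d such that the pushforward of P̄ under T_i equals P_i for each i, and ∑_{i=1}^N λ_i ∫ ‖x − T_i(x)‖² dP̄(x) = φ(P̄). -/

import Mathlib

open MeasureTheory ENNReal

/-- Points of `ℝ^d`. -/
abbrev Pt (d : ℕ) := EuclideanSpace ℝ (Fin d)

/-- The set of atoms (support points) of a measure. -/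
def msupp {α : Type*} [MeasurableSpace α] (P : Measure α) : Set α := {x | P {x} ≠ 0}

/-- A measure is finitely supported (discrete) if its set of atoms is finite and
carries all the mass. -/
def FinitelySupported {α : Type*} [MeasurableSpace α] (P : Measure α) : Prop :=
  (msupp P).Finite ∧ P (msupp P)ᶜ = 0

/-- Finite second moment. -/
def FiniteSecondMoment {d : ℕ} (P : Measure (Pt d)) : Prop :=
  ∫⁻ x, ENNReal.ofReal (‖x‖ ^ 2) ∂P < ⊤

/-- The squared 2-Wasserstein distance: the infimum of `∫ ‖x - y‖² dπ` over all
couplings `π` of `P` and `Q`. -/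
noncomputable def W2sq {d : ℕ} (P Q : Measure (Pt d)) : ℝ≥0∞ :=
  ⨅ π ∈ {π : Measure (Pt d × Pt d) | π.map Prod.fst = P ∧ π.map Prod.snd = Q},
    ∫⁻ p, ENNReal.ofReal (‖p.1 - p.2‖ ^ 2) ∂π

/-- The barycenter objective `φ(P) = ∑ i, λ i * W₂(P, P i)²`. -/
noncomputable def phi {d N : ℕ} (l : Fin N → ℝ) (Pm : Fin N → Measure (Pt d))
    (P : Measure (Pt d)) : ℝ≥0∞ :=
  ∑ i, ENNReal.ofReal (l i) * W2sq P (Pm i)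

/-- A (Wasserstein) barycenter: a probability measure with finite second moment
minimizing `φ` among all such measures. -/
def IsBarycenter {d N : ℕ} (l : Fin N → ℝ) (Pm : Fin N → Measure (Pt d))
    (P : Measure (Pt d)) : Prop :=
  IsProbabilityMeasure P ∧ FiniteSecondMoment P ∧
    ∀ Q : Measure (Pt d), IsProbabilityMeasure Q → FiniteSecondMoment Q →
      phi l Pm P ≤ phi l Pm Q

/-- The set `S` of weighted centroids of combinations of support points,
one from each measure. -/
def centroidSet {d N : ℕ} (l : Fin N → ℝ) (Pm : Fin N → Measure (Pt d)) : Set (Pt d) :=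
  {y | ∃ x : Fin N → Pt d, (∀ i, x i ∈ msupp (Pm i)) ∧ y = ∑ i, l i • x i}

/-- The union `S_org` of the supports of the measures. -/
def origSupport {d N : ℕ} (Pm : Fin N → Measure (Pt d)) : Set (Pt d) :=
  ⋃ i, msupp (Pm i)

/-!
Let `π i` be couplings of `P̄` and `P i`, and let `f i b x` be the conditional probability that
`π i` sends `x` to the atom `b` of `P i`. Gluing the `π i` along `P̄` sends `x` to the tuple `t`
with probability `∏ j, f j (t j) x`. The law `Q` of the centroid `t̄ = ∑ j, λ j • t j` is a
competitor for `P̄`, and the identity `∑ λ i ‖x - t i‖² = ∑ λ i ‖t̄ - t i‖² + ‖x - t̄‖²` gives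
`φ(P̄) + D ≤ ∑ λ i cost(π i)`, where `D` is the mean of `‖x - t̄‖²` under the glued plan.

For near-optimal couplings `D` is arbitrarily small, and it dominates `∫ dist(x, S)² dP̄` for the
finite set `S` of centroids, so `P̄` is concentrated on `S`. Optimal couplings then exist and have
`D = 0`: above each atom `x`, every tuple of atoms charged by the `π i` has centroid `x`. Since
changing one entry of a tuple moves its centroid, each `π i` charges a single point `T i x`
above `x`, that is, `π i` is the law of `(x, T i x)`.
-/

open scoped NNReal

section FiniteSupport

variable {α β ι : Type*} [MeasurableSpace α] [MeasurableSpace β]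

lemma map_sum_smul_dirac (s : Finset ι) (c : ι → ℝ≥0∞) (p : ι → α) {f : α → β}
    (hf : Measurable f) :
    (∑ t ∈ s, c t • Measure.dirac (p t)).map f = ∑ t ∈ s, c t • Measure.dirac (f (p t)) := by
  rw [Measure.map_finset_sum hf.aemeasurable]
  exact Finset.sum_congr rfl fun t _ => by rw [Measure.map_smul, Measure.map_dirac' hf]

lemma sum_smul_dirac_apply (s : Finset ι) (c : ι → ℝ≥0∞) (p : ι → α) (A : Set α) :
    (∑ t ∈ s, c t • Measure.dirac (p t)) A = ∑ t ∈ s, c t * Measure.dirac (p t) A := by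
  simp only [Measure.finsetSum_apply, Measure.smul_apply, smul_eq_mul]

lemma lintegral_sum_smul_dirac (s : Finset ι) (c : ι → ℝ≥0∞) (p : ι → α) {f : α → ℝ≥0∞}
    (hf : Measurable f) :
    ∫⁻ x, f x ∂(∑ t ∈ s, c t • Measure.dirac (p t)) = ∑ t ∈ s, c t * f (p t) := by
  rw [lintegral_finsetSum_measure]
  exact Finset.sum_congr rfl fun t _ => by rw [lintegral_smul_measure, lintegral_dirac' _ hf,
    smul_eq_mul]

lemma continuous_sum_smul_dirac_apply (K : Finset α) (A : Set α) :
    Continuous fun m : α → ℝ≥0∞ => (∑ k ∈ K, m k • Measure.dirac k) A := by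
  simp only [sum_smul_dirac_apply]
  exact continuous_finsetSum _ fun k _ =>
    (ENNReal.continuous_mul_const (measure_ne_top _ _)).comp (continuous_apply k)

lemma continuous_lintegral_sum_smul_dirac (K : Finset α) {c : α → ℝ≥0∞} (hc : Measurable c)
    (hc_top : ∀ k, c k ≠ ⊤) :
    Continuous fun m : α → ℝ≥0∞ => ∫⁻ x, c x ∂(∑ k ∈ K, m k • Measure.dirac k) := by
  simp only [lintegral_sum_smul_dirac _ _ _ hc]
  exact continuous_finsetSum _ fun k _ =>
    (ENNReal.continuous_mul_const (hc_top k)).comp (continuous_apply k)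

variable [MeasurableSingletonClass α] {μ ν : Measure α} {F : Finset α}

lemma lintegral_eq_sum_of_measure_compl_eq_zero (hF : μ (↑F)ᶜ = 0) (f : α → ℝ≥0∞) :
    ∫⁻ x, f x ∂μ = ∑ x ∈ F, f x * μ {x} := by
  rw [← lintegral_finset F f, Measure.restrict_eq_self_of_ae_mem (ae_iff.2 hF)]

lemma eq_sum_smul_dirac_of_measure_compl_eq_zero (hF : μ (↑F)ᶜ = 0) :
    μ = ∑ x ∈ F, μ {x} • Measure.dirac x := by
  ext A hA
  rw [← lintegral_indicator_one hA, lintegral_eq_sum_of_measure_compl_eq_zero hF,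
    Measure.finsetSum_apply]
  refine Finset.sum_congr rfl fun x _ => ?_
  rw [Measure.smul_apply, Measure.dirac_apply' _ hA, smul_eq_mul, mul_comm]

lemma eq_of_measure_compl_eq_zero_of_forall_singleton (hμ : μ (↑F)ᶜ = 0) (hν : ν (↑F)ᶜ = 0)
    (h : ∀ x ∈ F, μ {x} = ν {x}) : μ = ν := by
  rw [eq_sum_smul_dirac_of_measure_compl_eq_zero hμ, eq_sum_smul_dirac_of_measure_compl_eq_zero hν]
  exact Finset.sum_congr rfl fun x hx => by rw [h x hx]

lemma measurable_of_forall_notMem_eq {f : α → β} {s : Set α} (hs : s.Countable) (c : β)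
    (h : ∀ x ∉ s, f x = c) : Measurable f := by
  have := hs.to_subtype
  refine measurable_of_restrict_of_restrict_compl hs.measurableSet (measurable_of_countable _) ?_
  convert measurable_const (a := c) using 1
  exact funext fun x : ↥sᶜ => h x.1 x.2

lemma map_sum_smul_dirac_eq_of_forall_singleton {γ : Type*} [MeasurableSpace γ] {S : Finset α}
    (hS : μ (↑S)ᶜ = 0) {K : Finset γ} (m : γ → ℝ≥0∞) {f : γ → α} (hf : Measurable f)
    (hK : ∀ k ∈ K, f k ∈ S)
    (h : ∀ s ∈ S, (∑ k ∈ K, m k • Measure.dirac k) (f ⁻¹' {s}) = μ {s}) :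
    (∑ k ∈ K, m k • Measure.dirac k).map f = μ := by
  refine eq_of_measure_compl_eq_zero_of_forall_singleton ?_ hS fun s hs => ?_
  · rw [map_sum_smul_dirac _ _ _ hf, sum_smul_dirac_apply]
    exact Finset.sum_eq_zero fun k hk => by
      simp [Measure.dirac_apply' _ S.measurableSet.compl, hK k hk]
  · rw [Measure.map_apply hf (measurableSet_singleton s), h s hs]

end FiniteSupport

section Couplings

variable {α β : Type*} [MeasurableSpace α] [MeasurableSpace β]
  {P : Measure α} {Q : Measure β} {π : Measure (α × β)}

lemma isProbabilityMeasure_of_map_eq {μ : Measure α} {f : α → β} {ν : Measure β}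
    [IsProbabilityMeasure ν] (h : μ.map f = ν) : IsProbabilityMeasure μ := by
  subst h
  exact Measure.isProbabilityMeasure_of_map f

variable [MeasurableSingletonClass α] [MeasurableSingletonClass β]

lemma measure_compl_prod_eq_zero (h1 : π.map Prod.fst = P) (h2 : π.map Prod.snd = Q)
    {S : Finset α} {B : Finset β} (hS : P (↑S)ᶜ = 0) (hB : Q (↑B)ᶜ = 0) :
    π (↑(S ×ˢ B))ᶜ = 0 := by
  rw [Finset.coe_product, Set.compl_prod_eq_union]
  refine measure_union_null ?_ ?_
  · rwa [← h1, Measure.map_apply measurable_fst S.measurableSet.compl, ← Set.prod_univ] at hS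
  · rwa [← h2, Measure.map_apply measurable_snd B.measurableSet.compl, ← Set.univ_prod] at hB

theorem exists_coupling_forall_lintegral_le [IsProbabilityMeasure P] [IsProbabilityMeasure Q]
    {S : Finset α} {B : Finset β} (hS : P (↑S)ᶜ = 0) (hB : Q (↑B)ᶜ = 0)
    {c : α × β → ℝ≥0∞} (hc : Measurable c) (hc_top : ∀ p, c p ≠ ⊤) :
    ∃ π : Measure (α × β), π.map Prod.fst = P ∧ π.map Prod.snd = Q ∧
      ∀ π' : Measure (α × β), π'.map Prod.fst = P → π'.map Prod.snd = Q →
        ∫⁻ p, c p ∂π ≤ ∫⁻ p, c p ∂π' := by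
  -- A coupling is determined by its masses on `S ×ˢ B`, and these range over a compact set.
  let plan : (α × β → ℝ≥0∞) → Measure (α × β) := fun m => ∑ k ∈ S ×ˢ B, m k • Measure.dirac k
  have hcont A := continuous_sum_smul_dirac_apply (S ×ˢ B) A
  let C : Set (α × β → ℝ≥0∞) := {m | (∀ s ∈ S, plan m (Prod.fst ⁻¹' {s}) = P {s}) ∧
    ∀ b ∈ B, plan m (Prod.snd ⁻¹' {b}) = Q {b}}
  have hC : IsClosed C := by
    simp only [C, Set.ofPred_and, Set.ofPred_forall]
    exact (isClosed_biInter fun s _ => isClosed_eq (hcont _) continuous_const).inter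
      (isClosed_biInter fun b _ => isClosed_eq (hcont _) continuous_const)
  have hplan (π' : Measure (α × β)) (h1 : π'.map Prod.fst = P) (h2 : π'.map Prod.snd = Q) :
      plan (fun k => π' {k}) = π' :=
    (eq_sum_smul_dirac_of_measure_compl_eq_zero (measure_compl_prod_eq_zero h1 h2 hS hB)).symm
  have hmem (π' : Measure (α × β)) (h1 : π'.map Prod.fst = P) (h2 : π'.map Prod.snd = Q) :
      (fun k => π' {k}) ∈ C := by
    simp only [C, hplan π' h1 h2, Set.mem_ofPred_eq]
    refine ⟨fun s _ => ?_, fun b _ => ?_⟩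
    · rw [← h1, Measure.map_apply measurable_fst (measurableSet_singleton s)]
    · rw [← h2, Measure.map_apply measurable_snd (measurableSet_singleton b)]
  obtain ⟨m, hm, hmin⟩ := hC.isCompact.exists_isMinOn ⟨_, hmem (P.prod Q) (by simp) (by simp)⟩
    (continuous_lintegral_sum_smul_dirac (S ×ˢ B) hc hc_top).continuousOn
  refine ⟨plan m, ?_, ?_, fun π' h1 h2 => ?_⟩
  · exact map_sum_smul_dirac_eq_of_forall_singleton hS m measurable_fst
      (fun k hk => (Finset.mem_product.1 hk).1) hm.1
  · exact map_sum_smul_dirac_eq_of_forall_singleton hB m measurable_snd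
      (fun k hk => (Finset.mem_product.1 hk).2) hm.2
  · have hle : ∫⁻ p, c p ∂(plan m) ≤ ∫⁻ p, c p ∂(plan fun k => π' {k}) := hmin (hmem π' h1 h2)
    rwa [hplan π' h1 h2] at hle

open Classical in
theorem exists_measurable_eq_map_graph [Nonempty β] {K : Finset (α × β)} (hK : π (↑K)ᶜ = 0)
    (h : ∀ x b b', π {(x, b)} ≠ 0 → π {(x, b')} ≠ 0 → b = b') :
    ∃ T : α → β, Measurable T ∧ π = (π.map Prod.fst).map fun x => (x, T x) := by
  have hK' (p : α × β) (hp : π {p} ≠ 0) : p ∈ K :=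
    by_contra fun hpK => hp (measure_mono_null (by simpa using hpK) hK)
  let T x := if hx : ∃ b, π {(x, b)} ≠ 0 then hx.choose else Classical.arbitrary β
  have hT (p : α × β) (hp : π {p} ≠ 0) : T p.1 = p.2 := by
    have hx : ∃ b, π {(p.1, b)} ≠ 0 := ⟨p.2, hp⟩
    simp only [T, dif_pos hx]
    exact h _ _ _ hx.choose_spec hp
  have hTm : Measurable T := by
    refine measurable_of_forall_notMem_eq (K.image Prod.fst).countable_toSet
      (Classical.arbitrary β) fun x hx => dif_neg ?_
    rintro ⟨b, hb⟩
    exact hx (Finset.mem_coe.2 (Finset.mem_image_of_mem Prod.fst (hK' _ hb)))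
  have hπ := eq_sum_smul_dirac_of_measure_compl_eq_zero hK
  refine ⟨T, hTm, ?_⟩
  calc π = ∑ p ∈ K, π {p} • Measure.dirac p := hπ
    _ = ∑ p ∈ K, π {p} • Measure.dirac (p.1, T p.1) := Finset.sum_congr rfl fun p _ => by
        by_cases hp : π {p} = 0
        · simp [hp]
        · rw [hT p hp]
    _ = (∑ p ∈ K, π {p} • Measure.dirac p.1).map fun x => (x, T x) :=
        (map_sum_smul_dirac K (fun p => π {p}) Prod.fst (measurable_id.prodMk hTm)).symm
    _ = _ := by
        congr 1
        conv_rhs => rw [hπ]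
        exact (map_sum_smul_dirac _ _ _ measurable_fst).symm

end Couplings

section CouplingDensity

variable {α β : Type*} [MeasurableSpace α] [MeasurableSpace β]

/-- `f b x` is the probability that a coupling of `P` and `Q` sends the point `x` to `b`. -/
structure IsCouplingDensity (P : Measure α) (Q : Measure β) (B : Finset β)
    (f : β → α → ℝ≥0∞) : Prop where
  measurable : ∀ b, Measurable (f b)
  sum_eq_one : ∀ᵐ x ∂P, ∑ b ∈ B, f b x = 1
  lintegral_eq : ∀ b ∈ B, ∫⁻ x, f b x ∂P = Q {b}
  measure_compl : Q (↑B)ᶜ = 0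

noncomputable def couplingDensity (π : Measure (α × β)) (b : β) : α → ℝ≥0∞ :=
  ((π.restrict (Prod.snd ⁻¹' {b})).map Prod.fst).rnDeriv (π.map Prod.fst)

lemma measurable_couplingDensity (π : Measure (α × β)) (b : β) :
    Measurable (couplingDensity π b) :=
  Measure.measurable_rnDeriv _ _

variable (π : Measure (α × β)) [IsFiniteMeasure π]

lemma withDensity_couplingDensity (b : β) :
    (π.map Prod.fst).withDensity (couplingDensity π b) =
      (π.restrict (Prod.snd ⁻¹' {b})).map Prod.fst :=
  Measure.withDensity_rnDeriv_eq _ _ <| Measure.absolutelyContinuous_of_le <|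
    Measure.map_mono Measure.restrict_le_self measurable_fst

lemma lintegral_couplingDensity_mul (b : β) {g : α → ℝ≥0∞} (hg : Measurable g) :
    ∫⁻ x, couplingDensity π b x * g x ∂(π.map Prod.fst) =
      ∫⁻ p in Prod.snd ⁻¹' {b}, g p.1 ∂π := by
  rw [← lintegral_map hg measurable_fst, ← withDensity_couplingDensity,
    lintegral_withDensity_eq_lintegral_mul _ (measurable_couplingDensity π b) hg]
  rfl

lemma couplingDensity_mul_measure_singleton [MeasurableSingletonClass α]
    [MeasurableSingletonClass β] (x : α) (b : β) :
    couplingDensity π b x * π.map Prod.fst {x} = π {(x, b)} := by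
  rw [← lintegral_singleton, ← withDensity_apply _ (measurableSet_singleton x),
    withDensity_couplingDensity, Measure.map_apply measurable_fst (measurableSet_singleton x),
    Measure.restrict_apply (measurable_fst (measurableSet_singleton x))]
  congr 1
  ext p
  simp [Prod.ext_iff]

variable [MeasurableSingletonClass β] {π} {B : Finset β}

lemma sum_lintegral_couplingDensity_mul (hB : π.map Prod.snd (↑B)ᶜ = 0) {g : α × β → ℝ≥0∞}
    (hg : Measurable g) :
    ∑ b ∈ B, ∫⁻ x, couplingDensity π b x * g (x, b) ∂(π.map Prod.fst) = ∫⁻ p, g p ∂π := by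
  have hcover : ∀ᵐ p ∂π, p ∈ ⋃ b ∈ B, Prod.snd ⁻¹' {b} := by
    rw [Measure.map_apply measurable_snd B.measurableSet.compl] at hB
    refine measure_mono_null (fun p hp => ?_) hB
    simpa using hp
  conv_rhs => rw [← Measure.restrict_eq_self_of_ae_mem hcover]
  rw [lintegral_biUnion_finset (Set.pairwiseDisjoint_fiber _ _)
    (fun b _ => measurable_snd (measurableSet_singleton b))]
  refine Finset.sum_congr rfl fun b _ => ?_
  rw [lintegral_couplingDensity_mul π b (g := fun x => g (x, b)) (by fun_prop)]
  refine setLIntegral_congr_fun (measurable_snd (measurableSet_singleton b)) fun p hp => ?_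
  simp only [Set.mem_preimage, Set.mem_singleton_iff] at hp
  simp [← hp]

theorem isCouplingDensity_couplingDensity {P : Measure α} {Q : Measure β}
    (h1 : π.map Prod.fst = P) (h2 : π.map Prod.snd = Q) (hB : Q (↑B)ᶜ = 0) :
    IsCouplingDensity P Q B (couplingDensity π) := by
  subst h1 h2
  refine ⟨measurable_couplingDensity π, ?_, fun b _ => ?_, hB⟩
  · refine ae_eq_of_forall_setLIntegral_eq_of_sigmaFinite
      (Finset.measurable_sum _ fun b _ => measurable_couplingDensity π b) measurable_const
      fun A hA _ => ?_
    have hA1 : Measurable (A.indicator (1 : α → ℝ≥0∞)) := measurable_const.indicator hA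
    calc ∫⁻ x in A, ∑ b ∈ B, couplingDensity π b x ∂π.map Prod.fst
        = ∑ b ∈ B, ∫⁻ x, couplingDensity π b x * A.indicator 1 x ∂π.map Prod.fst := by
          rw [lintegral_finsetSum _ fun b _ => measurable_couplingDensity π b]
          refine Finset.sum_congr rfl fun b _ => ?_
          rw [← lintegral_indicator hA]
          congr 1
          ext x
          by_cases hx : x ∈ A <;> simp [hx]
      _ = ∫⁻ p, A.indicator 1 p.1 ∂π :=
          sum_lintegral_couplingDensity_mul hB (hA1.comp measurable_fst)
      _ = ∫⁻ x in A, 1 ∂π.map Prod.fst := by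
          rw [← lintegral_map hA1 measurable_fst, lintegral_indicator hA]
          rfl
  · simpa [Measure.map_apply measurable_snd (measurableSet_singleton b)] using
      lintegral_couplingDensity_mul π b (g := fun _ => 1) measurable_const

end CouplingDensity

section Wasserstein

variable {d : ℕ} {P Q : Measure (Pt d)}

lemma measurable_ofReal_norm_sub_sq :
    Measurable fun p : Pt d × Pt d => ENNReal.ofReal (‖p.1 - p.2‖ ^ 2) := by
  fun_prop

lemma W2sq_le_lintegral {π : Measure (Pt d × Pt d)} (h1 : π.map Prod.fst = P)
    (h2 : π.map Prod.snd = Q) : W2sq P Q ≤ ∫⁻ p, ENNReal.ofReal (‖p.1 - p.2‖ ^ 2) ∂π :=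
  iInf₂_le π ⟨h1, h2⟩

lemma exists_coupling_lintegral_le_W2sq_add (h : W2sq P Q ≠ ⊤) {ε : ℝ≥0∞} (hε : ε ≠ 0) :
    ∃ π : Measure (Pt d × Pt d), π.map Prod.fst = P ∧ π.map Prod.snd = Q ∧
      ∫⁻ p, ENNReal.ofReal (‖p.1 - p.2‖ ^ 2) ∂π ≤ W2sq P Q + ε := by
  have hlt := ENNReal.lt_add_right h hε
  conv_lhs at hlt => rw [W2sq]
  simp only [iInf_lt_iff] at hlt
  obtain ⟨π, ⟨h1, h2⟩, hπ⟩ := hlt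
  exact ⟨π, h1, h2, hπ.le⟩

lemma exists_coupling_lintegral_eq_W2sq [IsProbabilityMeasure P] [IsProbabilityMeasure Q]
    {S B : Finset (Pt d)} (hS : P (↑S)ᶜ = 0) (hB : Q (↑B)ᶜ = 0) :
    ∃ π : Measure (Pt d × Pt d), π.map Prod.fst = P ∧ π.map Prod.snd = Q ∧
      ∫⁻ p, ENNReal.ofReal (‖p.1 - p.2‖ ^ 2) ∂π = W2sq P Q := by
  obtain ⟨π, h1, h2, hmin⟩ := exists_coupling_forall_lintegral_le hS hB
    measurable_ofReal_norm_sub_sq fun _ => ENNReal.ofReal_ne_top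
  exact ⟨π, h1, h2, le_antisymm (le_iInf₂ fun π' hπ' => hmin π' hπ'.1 hπ'.2)
    (W2sq_le_lintegral h1 h2)⟩

lemma ofReal_norm_sub_sq_le {E : Type*} [SeminormedAddCommGroup E] (x y : E) :
    ENNReal.ofReal (‖x - y‖ ^ 2) ≤
      2 * ENNReal.ofReal (‖x‖ ^ 2) + 2 * ENNReal.ofReal (‖y‖ ^ 2) := by
  have h : ‖x - y‖ ^ 2 ≤ 2 * ‖x‖ ^ 2 + 2 * ‖y‖ ^ 2 := by
    nlinarith [norm_sub_le x y, norm_nonneg (x - y), sq_nonneg (‖x‖ - ‖y‖)]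
  calc ENNReal.ofReal (‖x - y‖ ^ 2) ≤ ENNReal.ofReal (2 * ‖x‖ ^ 2 + 2 * ‖y‖ ^ 2) :=
        ENNReal.ofReal_le_ofReal h
    _ = _ := by
        rw [ENNReal.ofReal_add (by positivity) (by positivity), ENNReal.ofReal_mul zero_le_two,
          ENNReal.ofReal_mul zero_le_two, ENNReal.ofReal_ofNat]

lemma W2sq_lt_top [IsProbabilityMeasure P] [IsProbabilityMeasure Q] (hP : FiniteSecondMoment P)
    (hQ : FiniteSecondMoment Q) : W2sq P Q < ⊤ := by
  have hmarg {μ : Measure (Pt d)} {f : Pt d × Pt d → Pt d} (hf : Measurable f)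
      (h : (P.prod Q).map f = μ) :
      ∫⁻ p, ENNReal.ofReal (‖f p‖ ^ 2) ∂(P.prod Q) = ∫⁻ x, ENNReal.ofReal (‖x‖ ^ 2) ∂μ := by
    rw [← h, lintegral_map (by fun_prop) hf]
  calc W2sq P Q ≤ ∫⁻ p, ENNReal.ofReal (‖p.1 - p.2‖ ^ 2) ∂(P.prod Q) :=
        W2sq_le_lintegral (by simp) (by simp)
    _ ≤ ∫⁻ p, 2 * ENNReal.ofReal (‖p.1‖ ^ 2) + 2 * ENNReal.ofReal (‖p.2‖ ^ 2) ∂(P.prod Q) :=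
        lintegral_mono fun p => ofReal_norm_sub_sq_le p.1 p.2
    _ = 2 * ∫⁻ x, ENNReal.ofReal (‖x‖ ^ 2) ∂P + 2 * ∫⁻ x, ENNReal.ofReal (‖x‖ ^ 2) ∂Q := by
        rw [lintegral_add_left (by fun_prop), lintegral_const_mul _ (by fun_prop),
          lintegral_const_mul _ (by fun_prop), hmarg (μ := P) measurable_fst (by simp),
          hmarg (μ := Q) measurable_snd (by simp)]
    _ < ⊤ := by finiteness

lemma finiteSecondMoment_sum_smul_dirac {ι : Type*} (s : Finset ι) {c : ι → ℝ≥0∞}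
    (hc : ∀ t ∈ s, c t ≠ ⊤) (p : ι → Pt d) :
    FiniteSecondMoment (∑ t ∈ s, c t • Measure.dirac (p t)) := by
  rw [FiniteSecondMoment, lintegral_sum_smul_dirac _ _ _ (by fun_prop), ENNReal.sum_lt_top]
  exact fun t ht => ENNReal.mul_lt_top (hc t ht).lt_top ENNReal.ofReal_lt_top

lemma finiteSecondMoment_of_measure_compl_eq_zero [IsFiniteMeasure P] {B : Finset (Pt d)}
    (hB : P (↑B)ᶜ = 0) : FiniteSecondMoment P := by
  rw [eq_sum_smul_dirac_of_measure_compl_eq_zero hB]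
  exact finiteSecondMoment_sum_smul_dirac _ (fun _ _ => measure_ne_top _ _) _

lemma phi_lt_top {N : ℕ} (l : Fin N → ℝ) {Pm : Fin N → Measure (Pt d)}
    [∀ i, IsProbabilityMeasure (Pm i)] (hPm : ∀ i, FiniteSecondMoment (Pm i))
    [IsProbabilityMeasure P] (hP : FiniteSecondMoment P) : phi l Pm P < ⊤ :=
  ENNReal.sum_lt_top.2 fun i _ => ENNReal.mul_lt_top ENNReal.ofReal_lt_top (W2sq_lt_top hP (hPm i))

end Wasserstein

section Centroid

variable {ι E : Type*} [Fintype ι]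

lemma sum_mul_norm_sub_sq_eq [NormedAddCommGroup E] [InnerProductSpace ℝ E] {w : ι → ℝ}
    (hw : ∑ i, w i = 1) (t : ι → E) (x : E) :
    ∑ i, w i * ‖x - t i‖ ^ 2 =
      ∑ i, w i * ‖(∑ j, w j • t j) - t i‖ ^ 2 + ‖x - ∑ j, w j • t j‖ ^ 2 := by
  set g := ∑ j, w j • t j
  have hsplit (i : ι) : ‖x - t i‖ ^ 2 =
      ‖x - g‖ ^ 2 + 2 * inner ℝ (x - g) (g - t i) + ‖g - t i‖ ^ 2 := by
    rw [← norm_add_sq_real, sub_add_sub_cancel]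
  have hcross : ∑ i, w i * inner ℝ (x - g) (g - t i) = 0 := by
    simp_rw [← real_inner_smul_right, ← inner_sum, smul_sub, Finset.sum_sub_distrib,
      ← Finset.sum_smul, hw, one_smul, g, sub_self, inner_zero_right]
  simp only [hsplit, mul_add, Finset.sum_add_distrib, ← Finset.sum_mul, hw,
    mul_left_comm _ (2 : ℝ), ← Finset.mul_sum, hcross]
  ring

lemma sum_ofReal_mul_norm_sub_sq_eq [NormedAddCommGroup E] [InnerProductSpace ℝ E] {w : ι → ℝ}
    (hw0 : ∀ i, 0 ≤ w i) (hw : ∑ i, w i = 1) (t : ι → E) (x : E) :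
    ∑ i, ENNReal.ofReal (w i) * ENNReal.ofReal (‖x - t i‖ ^ 2) =
      ∑ i, ENNReal.ofReal (w i) * ENNReal.ofReal (‖(∑ j, w j • t j) - t i‖ ^ 2) +
        ENNReal.ofReal (‖x - ∑ j, w j • t j‖ ^ 2) := by
  simp_rw [← ENNReal.ofReal_mul (hw0 _)]
  have hnonneg (y : E) (i : ι) : 0 ≤ w i * ‖y - t i‖ ^ 2 := by have := hw0 i; positivity
  rw [← ENNReal.ofReal_sum_of_nonneg fun i _ => hnonneg x i,
    ← ENNReal.ofReal_sum_of_nonneg fun i _ => hnonneg _ i,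
    ← ENNReal.ofReal_add (Finset.sum_nonneg fun i _ => hnonneg _ i) (by positivity),
    sum_mul_norm_sub_sq_eq hw]

lemma eq_of_forall_sum_smul_eq [DecidableEq ι] {𝕜 : Type*} [Field 𝕜] [AddCommGroup E]
    [Module 𝕜 E] {w : ι → 𝕜} (hw : ∀ i, w i ≠ 0) {A : ι → Set E} {s : E}
    (hA : ∀ t : ι → E, (∀ j, t j ∈ A j) → ∑ j, w j • t j = s) {t : ι → E}
    (ht : ∀ j, t j ∈ A j) {i : ι} {b : E} (hb : b ∈ A i) : b = t i := by
  have h := hA (Function.update t i b) fun j => by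
    rcases eq_or_ne j i with rfl | hj
    · simpa using hb
    · simpa [hj] using ht j
  rw [← hA t ht, ← Finset.add_sum_erase _ _ (Finset.mem_univ i),
    ← Finset.add_sum_erase _ _ (Finset.mem_univ i), Function.update_self,
    Finset.sum_congr rfl fun j hj => by rw [Function.update_of_ne (Finset.ne_of_mem_erase hj)]]
    at h
  exact smul_right_injective E (hw i) (add_right_cancel h)

end Centroid

lemma sum_piFinset_prod_eq_one {ι κ R : Type*} [Fintype ι] [DecidableEq ι] [CommSemiring R]
    {B : ι → Finset κ} {f : ι → κ → R} (hf : ∀ j, ∑ b ∈ B j, f j b = 1) :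
    ∑ t ∈ Fintype.piFinset B, ∏ j, f j (t j) = 1 := by
  simp [← Finset.prod_univ_sum, hf]

lemma sum_filter_piFinset_prod_eq {ι κ R : Type*} [Fintype ι] [DecidableEq ι] [DecidableEq κ]
    [CommSemiring R] {B : ι → Finset κ} {f : ι → κ → R} (hf : ∀ j, ∑ b ∈ B j, f j b = 1)
    {i : ι} {b : κ} (hb : b ∈ B i) :
    ∑ t ∈ Fintype.piFinset B with t i = b, ∏ j, f j (t j) = f i b := by
  rw [← Fintype.piFinset_update_singleton_eq_filter_piFinset_eq _ _ hb, ← Finset.prod_univ_sum,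
    ← Finset.mul_prod_erase _ _ (Finset.mem_univ i), Function.update_self, Finset.sum_singleton,
    Finset.prod_eq_one fun j hj => by rw [Function.update_of_ne (Finset.ne_of_mem_erase hj), hf j],
    mul_one]

section Gluing

variable {d N : ℕ} {l : Fin N → ℝ} {Pm : Fin N → Measure (Pt d)} {P : Measure (Pt d)}
  {B : Fin N → Finset (Pt d)} {f : Fin N → Pt d → Pt d → ℝ≥0∞}

noncomputable def densityCost (P : Measure (Pt d)) (B : Finset (Pt d))
    (f : Pt d → Pt d → ℝ≥0∞) : ℝ≥0∞ :=
  ∑ b ∈ B, ∫⁻ x, f b x * ENNReal.ofReal (‖x - b‖ ^ 2) ∂P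

lemma densityCost_couplingDensity {π : Measure (Pt d × Pt d)} [IsFiniteMeasure π]
    {Q : Measure (Pt d)} {B : Finset (Pt d)} (h1 : π.map Prod.fst = P) (h2 : π.map Prod.snd = Q)
    (hB : Q (↑B)ᶜ = 0) :
    densityCost P B (couplingDensity π) = ∫⁻ p, ENNReal.ofReal (‖p.1 - p.2‖ ^ 2) ∂π := by
  subst h1 h2
  exact sum_lintegral_couplingDensity_mul hB measurable_ofReal_norm_sub_sq

/-- Gluing the couplings given by the densities `f i` along `P` sends `x` to the tuple `t` with
probability `∏ j, f j (t j) x`; this is the mean squared distance from `x` to the centroid of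
its tuple. -/
noncomputable def centroidDefect (l : Fin N → ℝ) (P : Measure (Pt d)) (B : Fin N → Finset (Pt d))
    (f : Fin N → Pt d → Pt d → ℝ≥0∞) : ℝ≥0∞ :=
  ∑ t ∈ Fintype.piFinset B,
    ∫⁻ x, (∏ j, f j (t j) x) * ENNReal.ofReal (‖x - ∑ j, l j • t j‖ ^ 2) ∂P

lemma measurable_prod_of_isCouplingDensity (hf : ∀ i, IsCouplingDensity P (Pm i) (B i) (f i))
    (t : Fin N → Pt d) : Measurable fun x => ∏ j, f j (t j) x :=
  Finset.measurable_prod _ fun j _ => (hf j).measurable (t j)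

lemma sum_filter_lintegral_prod_mul_eq (hf : ∀ i, IsCouplingDensity P (Pm i) (B i) (f i))
    {i : Fin N} {b : Pt d} (hb : b ∈ B i) {g : Pt d → ℝ≥0∞} (hg : Measurable g) :
    ∑ t ∈ Fintype.piFinset B with t i = b, ∫⁻ x, (∏ j, f j (t j) x) * g x ∂P =
      ∫⁻ x, f i b x * g x ∂P := by
  rw [← lintegral_finsetSum (f := fun t x => (∏ j, f j (t j) x) * g x) _
    fun t _ => (measurable_prod_of_isCouplingDensity hf t).mul hg]
  refine lintegral_congr_ae ?_
  filter_upwards [ae_all_iff.2 fun j => (hf j).sum_eq_one] with x hx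
  rw [← Finset.sum_mul, sum_filter_piFinset_prod_eq hx hb]

lemma sum_lintegral_prod_smul_dirac_eq (hf : ∀ i, IsCouplingDensity P (Pm i) (B i) (f i))
    (i : Fin N) :
    ∑ t ∈ Fintype.piFinset B, (∫⁻ x, ∏ j, f j (t j) x ∂P) • Measure.dirac (t i) = Pm i := by
  rw [← Finset.sum_fiberwise_of_maps_to fun t ht => Fintype.mem_piFinset.1 ht i,
    eq_sum_smul_dirac_of_measure_compl_eq_zero (hf i).measure_compl]
  refine Finset.sum_congr rfl fun b hb => ?_
  rw [Finset.sum_congr rfl fun t ht => by rw [(Finset.mem_filter.1 ht).2], ← Finset.sum_smul,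
    ← (hf i).lintegral_eq b hb]
  simpa using congrArg (· • Measure.dirac b)
    (sum_filter_lintegral_prod_mul_eq hf hb (g := fun _ => 1) measurable_const)

lemma phi_sum_smul_dirac_le (F : Finset (Fin N → Pt d)) (c : (Fin N → Pt d) → ℝ≥0∞)
    (z : (Fin N → Pt d) → Pt d) (hF : ∀ i, ∑ t ∈ F, c t • Measure.dirac (t i) = Pm i) :
    phi l Pm (∑ t ∈ F, c t • Measure.dirac (z t)) ≤
      ∑ t ∈ F, c t * ∑ i, ENNReal.ofReal (l i) * ENNReal.ofReal (‖z t - t i‖ ^ 2) := by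
  have hW (i : Fin N) : W2sq (∑ t ∈ F, c t • Measure.dirac (z t)) (Pm i) ≤
      ∑ t ∈ F, c t * ENNReal.ofReal (‖z t - t i‖ ^ 2) := by
    have h := W2sq_le_lintegral (Q := Pm i) (π := ∑ t ∈ F, c t • Measure.dirac (z t, t i))
      (map_sum_smul_dirac _ _ _ measurable_fst)
      (by rw [map_sum_smul_dirac _ _ _ measurable_snd]; exact hF i)
    rwa [lintegral_sum_smul_dirac _ _ _ measurable_ofReal_norm_sub_sq] at h
  calc phi l Pm _ ≤ ∑ i, ENNReal.ofReal (l i) * ∑ t ∈ F, c t * ENNReal.ofReal (‖z t - t i‖ ^ 2) :=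
        Finset.sum_le_sum fun i _ => by gcongr; exact hW i
    _ = _ := by
        simp_rw [Finset.mul_sum]
        rw [Finset.sum_comm]
        exact Finset.sum_congr rfl fun t _ => Finset.sum_congr rfl fun i _ => mul_left_comm _ _ _

lemma sum_mul_spread_add_centroidDefect (hl : ∀ i, 0 ≤ l i) (hsum : ∑ i, l i = 1)
    (hf : ∀ i, IsCouplingDensity P (Pm i) (B i) (f i)) :
    ∑ t ∈ Fintype.piFinset B, (∫⁻ x, ∏ j, f j (t j) x ∂P) *
        ∑ i, ENNReal.ofReal (l i) * ENNReal.ofReal (‖(∑ j, l j • t j) - t i‖ ^ 2) +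
      centroidDefect l P B f = ∑ i, ENNReal.ofReal (l i) * densityCost P (B i) (f i) := by
  have hmeas := measurable_prod_of_isCouplingDensity hf
  calc _ = ∑ t ∈ Fintype.piFinset B, ∫⁻ x, (∏ j, f j (t j) x) *
          ∑ i, ENNReal.ofReal (l i) * ENNReal.ofReal (‖x - t i‖ ^ 2) ∂P := by
        rw [centroidDefect, ← Finset.sum_add_distrib]
        refine Finset.sum_congr rfl fun t _ => ?_
        rw [← lintegral_mul_const _ (hmeas t), ← lintegral_add_left ((hmeas t).mul_const _)]
        refine lintegral_congr fun x => ?_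
        rw [← mul_add, sum_ofReal_mul_norm_sub_sq_eq hl hsum t x]
    _ = ∑ i, ENNReal.ofReal (l i) * ∑ t ∈ Fintype.piFinset B,
          ∫⁻ x, (∏ j, f j (t j) x) * ENNReal.ofReal (‖x - t i‖ ^ 2) ∂P := by
        simp_rw [Finset.mul_sum]
        rw [Finset.sum_comm]
        refine Finset.sum_congr rfl fun t _ => ?_
        rw [lintegral_finsetSum (f := fun i x => (∏ j, f j (t j) x) *
          (ENNReal.ofReal (l i) * ENNReal.ofReal (‖x - t i‖ ^ 2))) _ fun i _ => by fun_prop]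
        refine Finset.sum_congr rfl fun i _ => ?_
        simp_rw [mul_left_comm (∏ j, f j (t j) _)]
        exact lintegral_const_mul _ (by fun_prop)
    _ = _ := by
        refine Finset.sum_congr rfl fun i _ => ?_
        rw [densityCost, ← Finset.sum_fiberwise_of_maps_to fun t ht => Fintype.mem_piFinset.1 ht i]
        congr 1
        refine Finset.sum_congr rfl fun b hb => ?_
        rw [Finset.sum_congr rfl fun t ht => by rw [(Finset.mem_filter.1 ht).2]]
        exact sum_filter_lintegral_prod_mul_eq hf hb (by fun_prop)

end Gluing

section Barycenter

variable {d N : ℕ} {l : Fin N → ℝ} {Pm : Fin N → Measure (Pt d)} {P : Measure (Pt d)}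
  {B : Fin N → Finset (Pt d)} {f : Fin N → Pt d → Pt d → ℝ≥0∞}

theorem IsBarycenter.phi_add_centroidDefect_le (hl : ∀ i, 0 ≤ l i) (hsum : ∑ i, l i = 1)
    (hbar : IsBarycenter l Pm P) (hf : ∀ i, IsCouplingDensity P (Pm i) (B i) (f i)) :
    phi l Pm P + centroidDefect l P B f ≤
      ∑ i, ENNReal.ofReal (l i) * densityCost P (B i) (f i) := by
  have := hbar.1
  set c : (Fin N → Pt d) → ℝ≥0∞ := fun t => ∫⁻ x, ∏ j, f j (t j) x ∂P
  have hc : ∑ t ∈ Fintype.piFinset B, c t = 1 := by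
    rw [← lintegral_finsetSum _ fun t _ => measurable_prod_of_isCouplingDensity hf t,
      ← measure_univ (μ := P), ← lintegral_one]
    refine lintegral_congr_ae ?_
    filter_upwards [ae_all_iff.2 fun j => (hf j).sum_eq_one] with x hx
    exact sum_piFinset_prod_eq_one hx
  -- the law of the centroid of the tuple to which the glued plan sends `x`
  set Q := ∑ t ∈ Fintype.piFinset B, c t • Measure.dirac (∑ j, l j • t j)
  have hQ : IsProbabilityMeasure Q := ⟨by simpa [Q, sum_smul_dirac_apply] using hc⟩
  have hQ2 : FiniteSecondMoment Q := finiteSecondMoment_sum_smul_dirac _ (fun t ht =>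
    ne_top_of_le_ne_top ENNReal.one_ne_top (hc ▸ Finset.single_le_sum (fun _ _ => zero_le) ht)) _
  calc phi l Pm P + centroidDefect l P B f ≤ phi l Pm Q + centroidDefect l P B f := by
        gcongr
        exact hbar.2.2 Q hQ hQ2
    _ ≤ ∑ t ∈ Fintype.piFinset B, c t *
          ∑ i, ENNReal.ofReal (l i) * ENNReal.ofReal (‖(∑ j, l j • t j) - t i‖ ^ 2) +
          centroidDefect l P B f := by
        gcongr
        exact phi_sum_smul_dirac_le _ _ _ (sum_lintegral_prod_smul_dirac_eq hf)
    _ = _ := sum_mul_spread_add_centroidDefect hl hsum hf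

lemma lintegral_infDist_sq_le_centroidDefect (hf : ∀ i, IsCouplingDensity P (Pm i) (B i) (f i)) :
    ∫⁻ x, ENNReal.ofReal
        (Metric.infDist x ↑((Fintype.piFinset B).image fun t => ∑ j, l j • t j) ^ 2) ∂P ≤
      centroidDefect l P B f := by
  have hmeas : ∀ t ∈ Fintype.piFinset B, Measurable fun x =>
      (∏ j, f j (t j) x) * ENNReal.ofReal (‖x - ∑ j, l j • t j‖ ^ 2) :=
    fun t _ => (measurable_prod_of_isCouplingDensity hf t).mul (by fun_prop)
  rw [centroidDefect, ← lintegral_finsetSum _ hmeas]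
  refine lintegral_mono_ae ?_
  filter_upwards [ae_all_iff.2 fun j => (hf j).sum_eq_one] with x hx
  rw [← one_mul (ENNReal.ofReal _), ← sum_piFinset_prod_eq_one hx, Finset.sum_mul]
  refine Finset.sum_le_sum fun t ht => ?_
  gcongr
  · exact Metric.infDist_nonneg
  rw [← dist_eq_norm]
  exact Metric.infDist_le_dist_of_mem (Finset.mem_coe.2 (Finset.mem_image_of_mem _ ht))

theorem IsBarycenter.lintegral_infDist_sq_le (hl : ∀ i, 0 < l i) (hsum : ∑ i, l i = 1)
    [∀ i, IsProbabilityMeasure (Pm i)] (hbar : IsBarycenter l Pm P)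
    (hB : ∀ i, Pm i (↑(B i))ᶜ = 0) {ε : ℝ≥0∞} (hε : ε ≠ 0) :
    ∫⁻ x, ENNReal.ofReal
        (Metric.infDist x ↑((Fintype.piFinset B).image fun t => ∑ j, l j • t j) ^ 2) ∂P ≤ ε := by
  have := hbar.1
  have hPm i := finiteSecondMoment_of_measure_compl_eq_zero (hB i)
  choose π h1 h2 hπ using fun i =>
    exists_coupling_lintegral_le_W2sq_add (W2sq_lt_top hbar.2.1 (hPm i)).ne hε
  have := fun i => isProbabilityMeasure_of_map_eq (h1 i)
  have hf i := isCouplingDensity_couplingDensity (h1 i) (h2 i) (hB i)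
  have hcost : ∑ i, ENNReal.ofReal (l i) * densityCost P (B i) (couplingDensity (π i)) ≤
      phi l Pm P + ε :=
    calc _ ≤ ∑ i, ENNReal.ofReal (l i) * (W2sq P (Pm i) + ε) := by
          gcongr with i
          rw [densityCost_couplingDensity (h1 i) (h2 i) (hB i)]
          exact hπ i
      _ = phi l Pm P + ε := by
          simp_rw [mul_add, Finset.sum_add_distrib, ← Finset.sum_mul,
            ← ENNReal.ofReal_sum_of_nonneg fun i _ => (hl i).le, hsum, ENNReal.ofReal_one,
            one_mul, phi]
  exact (lintegral_infDist_sq_le_centroidDefect hf).trans <|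
    (ENNReal.add_le_add_iff_left (phi_lt_top l hPm hbar.2.1).ne).1 <|
      (hbar.phi_add_centroidDefect_le (fun i => (hl i).le) hsum hf).trans hcost

theorem IsBarycenter.measure_compl_centroids_eq_zero (hl : ∀ i, 0 < l i) (hsum : ∑ i, l i = 1)
    [∀ i, IsProbabilityMeasure (Pm i)] (hbar : IsBarycenter l Pm P)
    (hB : ∀ i, Pm i (↑(B i))ᶜ = 0) :
    P (↑((Fintype.piFinset B).image fun t => ∑ j, l j • t j))ᶜ = 0 := by
  set G := (Fintype.piFinset B).image fun t => ∑ j, l j • t j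
  have hzero : ∫⁻ x, ENNReal.ofReal (Metric.infDist x G ^ 2) ∂P = 0 :=
    nonpos_iff_eq_zero.1 <| ENNReal.le_of_forall_pos_le_add fun ε hε _ => by
      rw [zero_add]
      exact hbar.lintegral_infDist_sq_le hl hsum hB (ENNReal.coe_ne_zero.2 hε.ne')
  rw [lintegral_eq_zero_iff (by fun_prop)] at hzero
  have hG : (G : Set (Pt d)).Nonempty := by
    refine Finset.coe_nonempty.2 (Finset.image_nonempty.2
      (Fintype.piFinset_nonempty.2 fun i => ?_))
    by_contra h
    simpa [Finset.not_nonempty_iff_eq_empty.1 h] using hB i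
  refine measure_mono_null (fun x hx => ?_) (ae_iff.1 hzero)
  have := (G.finite_toSet.isClosed.notMem_iff_infDist_pos hG).1 hx
  simp only [Set.mem_ofPred_eq, Pi.zero_apply, ENNReal.ofReal_eq_zero, not_le]
  positivity

lemma eq_centroid_of_centroidDefect_eq_zero (hD : centroidDefect l P B f = 0) {x : Pt d}
    (hx : P {x} ≠ 0) {t : Fin N → Pt d} (ht : t ∈ Fintype.piFinset B)
    (hft : ∏ j, f j (t j) x ≠ 0) : ∑ j, l j • t j = x := by
  have hle : (∏ j, f j (t j) x) * ENNReal.ofReal (‖x - ∑ j, l j • t j‖ ^ 2) * P {x} ≤ 0 := by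
    rw [← Finset.sum_eq_zero_iff.1 hD t ht]
    exact (lintegral_singleton (fun y => (∏ j, f j (t j) y) *
      ENNReal.ofReal (‖y - ∑ j, l j • t j‖ ^ 2)) x).symm.trans_le (setLIntegral_le_lintegral _ _)
  simp only [nonpos_iff_eq_zero, mul_eq_zero, hft, hx, ENNReal.ofReal_eq_zero, false_or,
    or_false] at hle
  exact (sub_eq_zero.1 (norm_eq_zero.1 (by nlinarith [norm_nonneg (x - ∑ j, l j • t j)]))).symm

theorem IsBarycenter.centroidDefect_couplingDensity_eq_zero (hl : ∀ i, 0 < l i)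
    (hsum : ∑ i, l i = 1) [∀ i, IsProbabilityMeasure (Pm i)] (hbar : IsBarycenter l Pm P)
    (hB : ∀ i, Pm i (↑(B i))ᶜ = 0) {π : Fin N → Measure (Pt d × Pt d)} [∀ i, IsFiniteMeasure (π i)]
    (h1 : ∀ i, (π i).map Prod.fst = P) (h2 : ∀ i, (π i).map Prod.snd = Pm i)
    (hopt : ∀ i, ∫⁻ p, ENNReal.ofReal (‖p.1 - p.2‖ ^ 2) ∂(π i) = W2sq P (Pm i)) :
    centroidDefect l P B (fun i => couplingDensity (π i)) = 0 := by
  have := hbar.1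
  have hcost : ∑ i, ENNReal.ofReal (l i) * densityCost P (B i) (couplingDensity (π i)) =
      phi l Pm P + 0 := by
    rw [add_zero, phi]
    refine Finset.sum_congr rfl fun i _ => ?_
    rw [densityCost_couplingDensity (h1 i) (h2 i) (hB i), hopt i]
  have hphi := phi_lt_top l (fun i => finiteSecondMoment_of_measure_compl_eq_zero (hB i)) hbar.2.1
  exact nonpos_iff_eq_zero.1 <| (ENNReal.add_le_add_iff_left hphi.ne).1 <| hcost ▸
    hbar.phi_add_centroidDefect_le (fun i => (hl i).le) hsum
      fun i => isCouplingDensity_couplingDensity (h1 i) (h2 i) (hB i)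

theorem IsBarycenter.eq_of_measure_singleton_ne_zero (hl : ∀ i, 0 < l i) (hsum : ∑ i, l i = 1)
    [∀ i, IsProbabilityMeasure (Pm i)] (hbar : IsBarycenter l Pm P)
    (hB : ∀ i, Pm i (↑(B i))ᶜ = 0) {π : Fin N → Measure (Pt d × Pt d)}
    (h1 : ∀ i, (π i).map Prod.fst = P) (h2 : ∀ i, (π i).map Prod.snd = Pm i)
    (hopt : ∀ i, ∫⁻ p, ENNReal.ofReal (‖p.1 - p.2‖ ^ 2) ∂(π i) = W2sq P (Pm i))
    {i : Fin N} {x b b' : Pt d} (hb : π i {(x, b)} ≠ 0) (hb' : π i {(x, b')} ≠ 0) : b = b' := by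
  have := hbar.1
  have := fun i => isProbabilityMeasure_of_map_eq (h1 i)
  have hx : P {x} ≠ 0 := fun h0 => hb <| by
    rw [← couplingDensity_mul_measure_singleton, h1 i, h0, mul_zero]
  have hatom j c (hc : π j {(x, c)} ≠ 0) : c ∈ B j ∧ couplingDensity (π j) c x ≠ 0 := by
    have hnull : π j (Prod.snd ⁻¹' (↑(B j))ᶜ) = 0 := by
      rw [← Measure.map_apply measurable_snd (B j).measurableSet.compl, h2 j, hB j]
    refine ⟨by_contra fun hcB => hc (measure_mono_null ?_ hnull), fun h0 => hc ?_⟩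
    · simpa using hcB
    · rw [← couplingDensity_mul_measure_singleton, h0, zero_mul]
  have hne j : ∃ c ∈ B j, couplingDensity (π j) c x ≠ 0 := by
    have hx1 : ∑ c ∈ B j, couplingDensity (π j) c x = 1 := by
      by_contra hx1
      exact hx (measure_mono_null (Set.singleton_subset_iff.2 hx1)
        (ae_iff.1 (isCouplingDensity_couplingDensity (h1 j) (h2 j) (hB j)).sum_eq_one))
    exact Finset.exists_ne_zero_of_sum_ne_zero (hx1 ▸ one_ne_zero)
  choose t ht using hne
  -- every tuple of atoms above `x` has centroid `x`, so each `π i` has one atom above `x`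
  have hcent (s : Fin N → Pt d) (hs : ∀ j, s j ∈ {c | c ∈ B j ∧ couplingDensity (π j) c x ≠ 0}) :
      ∑ j, l j • s j = x :=
    eq_centroid_of_centroidDefect_eq_zero
      (hbar.centroidDefect_couplingDensity_eq_zero hl hsum hB h1 h2 hopt) hx
      (Fintype.mem_piFinset.2 fun j => (hs j).1) (Finset.prod_ne_zero_iff.2 fun j _ => (hs j).2)
  have hunique c (hc : π i {(x, c)} ≠ 0) : c = t i :=
    eq_of_forall_sum_smul_eq (fun j => (hl j).ne') hcent (fun j => ht j) (hatom i c hc)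
  exact (hunique b hb).trans (hunique b' hb').symm

end Barycenter

/-- existence of a non-mass splitting optimal transport from a
barycenter to the measures: transport maps Tᵢ pushing the barycenter forward to
each Pᵢ whose total cost equals φ(P̄). -/
theorem exists_nonmass_splitting_optimal_transport {d N : ℕ}
    (l : Fin N → ℝ) (Pm : Fin N → Measure (Pt d))
    (hl : ∀ i, 0 < l i) (hsum : ∑ i, l i = 1)
    (hprob : ∀ i, IsProbabilityMeasure (Pm i))
    (hfin : ∀ i, FinitelySupported (Pm i))
    (Pbar : Measure (Pt d)) (hbar : IsBarycenter l Pm Pbar) :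
    ∃ T : Fin N → Pt d → Pt d,
      (∀ i, Measurable (T i)) ∧
      (∀ i, Pbar.map (T i) = Pm i) ∧
      ∑ i, ENNReal.ofReal (l i) * ∫⁻ x, ENNReal.ofReal (‖x - T i x‖ ^ 2) ∂Pbar =
        phi l Pm Pbar := by
  have := hbar.1
  choose B hB using fun i => (⟨(hfin i).1.toFinset, by simpa using (hfin i).2⟩ :
    ∃ B : Finset (Pt d), Pm i (↑B)ᶜ = 0)
  have hG := hbar.measure_compl_centroids_eq_zero hl hsum hB
  choose π h1 h2 hopt using fun i => exists_coupling_lintegral_eq_W2sq hG (hB i)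
  choose T hT hπT using fun i => exists_measurable_eq_map_graph
    (measure_compl_prod_eq_zero (h1 i) (h2 i) hG (hB i))
    fun x b b' => hbar.eq_of_measure_singleton_ne_zero hl hsum hB h1 h2 hopt
  refine ⟨T, hT, fun i => ?_, ?_⟩
  · rw [← h2 i, hπT i, h1 i, Measure.map_map (f := fun x => (x, T i x)) measurable_snd
      (by fun_prop)]
    rfl
  · refine Finset.sum_congr rfl fun i _ => ?_
    rw [← hopt i, hπT i, h1 i, lintegral_map (g := fun x => (x, T i x))
      measurable_ofReal_norm_sub_sq (by fun_prop)]
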